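/- Let F be a field, N = a + b with a, b ≥ 0, and α = (n_1,…,n_k) a composition of N. For T ∈ 𝒯^α_{a,b} given by the integers a_1,…,a_k, b_1,…,b_k, the following two identities of subgroups of GL_N(F) hold: (1) σ_T P_α σ_T⁻¹ ∩ (GL_a × GL_b) = P_{(a_1,…,a_k)} × P_{(b_1,…,b_k)}, and (2) σ_T M_α σ_T⁻¹ ∩ (GL_a × GL_b) = M_{(a_1,…,a_k)} × M_{(b_1,…,b_k)}. Here GL_a × GL_b is embedded block diagonally in GL_N(F), P_{(a_1,…,a_k)} ≤ GL_a(F) and P_{(b_1,…,b_k)} ≤ GL_b(F) are the block upper triangular subgroups for the indicated compositions (entries equal to 0 being ignored), and similarly for the Levi subgroups M. -/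

import Mathlib

/-!
Each side of both identities is a set of invertible matrices with prescribed zero entries, so
each identity reduces to an equivalence between the relations on indices that force a zero.
A position `x < N` lies in the first half (`x < a`) or the second, and has a block `p x < k`
inside its half (for `(a_1,…,a_k)`, resp. `(b_1,…,b_k)`). Then the `(a, b)`-block of `x` is its
half, its `(a_1,…,a_k,b_1,…,b_k)`-block is `p x` or `k + p x`, and, since `σ_T⁻¹` maps `A_j`
and `B_j` monotonically onto `I_j^A` and `I_j^B`, both inside the `j`-th block of `α`, the
`α`-block of `σ_T⁻¹ x` is `p x`. The explicit `σ_T⁻¹` is recognised as `Tuple.sort` of the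
indicator of the `I_j^B` because it is increasing on each half.
-/

open scoped MatrixGroups Matrix

namespace Stmt3

variable (F : Type*) [Field F]

/-- Extension of a tuple `n : Fin k → ℕ` by zero to all of `ℕ`. -/
def nExt {k : ℕ} (n : Fin k → ℕ) : ℕ → ℕ := fun i => if h : i < k then n ⟨i, h⟩ else 0

/-- Partial sums `ν_j = n 0 + ⋯ + n (j-1)`. -/
def psum {k : ℕ} (n : Fin k → ℕ) (j : ℕ) : ℕ := ∑ i ∈ Finset.range j, nExt n i

/-- Block index of a position `x` with respect to the composition `c` with `K` parts. -/
def blkIdxF (c : ℕ → ℕ) (K : ℕ) (x : ℕ) : ℕ :=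
  ((Finset.range K).filter (fun j => (∑ i ∈ Finset.range (j + 1), c i) ≤ x)).card

/-- The standard parabolic `P_n ≤ GL_M(F)` (as a set). -/
def PparGL (M : ℕ) {k : ℕ} (n : Fin k → ℕ) : Set (GL (Fin M) F) :=
  { g | ∀ i j : Fin M, blkIdxF (nExt n) k (j : ℕ) < blkIdxF (nExt n) k (i : ℕ) →
      g.val i j = 0 }

/-- The standard Levi `M_n ≤ GL_M(F)` (as a set): block diagonal invertible matrices. -/
def MparGL (M : ℕ) {k : ℕ} (n : Fin k → ℕ) : Set (GL (Fin M) F) :=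
  { g | ∀ i j : Fin M, blkIdxF (nExt n) k (j : ℕ) ≠ blkIdxF (nExt n) k (i : ℕ) →
      g.val i j = 0 }

/-- Conjugation `σ S σ⁻¹` by the permutation matrix of `σ`. -/
def conjPerm {M : ℕ} (σ : Equiv.Perm (Fin M)) (S : Set (GL (Fin M) F)) :
    Set (GL (Fin M) F) :=
  { g | ∃ p ∈ S, g.val = (p.val).submatrix σ.symm σ.symm }

def blkPair {k : ℕ} (aT bT : Fin k → ℕ) (x : ℕ) : ℕ :=
  ((Finset.range k).filter (fun j => psum aT (j + 1) + psum bT (j + 1) ≤ x)).card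

def isBTab {k : ℕ} (aT bT : Fin k → ℕ) (x : ℕ) : Bool :=
  decide (psum aT (blkPair aT bT x + 1) + psum bT (blkPair aT bT x) ≤ x)

/-- The permutation `σ_T` attached to a table `T = (aT, bT)`. -/
noncomputable def sigmaTab (N : ℕ) {k : ℕ} (aT bT : Fin k → ℕ) : Equiv.Perm (Fin N) :=
  (Tuple.sort (fun x : Fin N => isBTab aT bT (x : ℕ)))⁻¹

section BlockIndex

variable (c : ℕ → ℕ) (K : ℕ)

lemma blkIdxF_eq_of_mem {j x : ℕ} (hj : j < K) (hlo : ∑ i ∈ Finset.range j, c i ≤ x)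
    (hhi : x < ∑ i ∈ Finset.range (j + 1), c i) : blkIdxF c K x = j := by
  have hmono : Monotone fun m => ∑ i ∈ Finset.range m, c i :=
    fun _ _ h => Finset.sum_le_sum_of_subset (Finset.range_subset_range.2 h)
  have hfilter : (Finset.range K).filter (fun m => ∑ i ∈ Finset.range (m + 1), c i ≤ x) =
      Finset.range j := by
    ext m
    simp only [Finset.mem_filter, Finset.mem_range]
    constructor
    · rintro ⟨-, hm⟩
      by_contra! hjm
      exact (hhi.trans_le (hmono (Nat.succ_le_succ hjm))).not_ge hm
    · intro hmj
      exact ⟨hmj.trans hj, (hmono hmj).trans hlo⟩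
  rw [blkIdxF, hfilter, Finset.card_range]

lemma blkIdxF_spec {x : ℕ} (hx : x < ∑ i ∈ Finset.range K, c i) :
    blkIdxF c K x < K ∧ ∑ i ∈ Finset.range (blkIdxF c K x), c i ≤ x ∧
      x < ∑ i ∈ Finset.range (blkIdxF c K x + 1), c i := by
  classical
  have hK : 0 < K := Nat.pos_of_ne_zero fun h => by simp [h] at hx
  have hlast : x < ∑ i ∈ Finset.range (K - 1 + 1), c i := by rwa [Nat.sub_add_cancel hK]
  have hex : ∃ j, x < ∑ i ∈ Finset.range (j + 1), c i := ⟨K - 1, hlast⟩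
  have hjK : Nat.find hex < K := (Nat.find_min' hex hlast).trans_lt (Nat.sub_lt hK one_pos)
  have hlo : ∑ i ∈ Finset.range (Nat.find hex), c i ≤ x := by
    rcases hj : Nat.find hex with _ | m
    · simp
    · exact not_lt.1 (Nat.find_min hex (hj ▸ Nat.lt_succ_self m))
  rw [blkIdxF_eq_of_mem c K hjK hlo (Nat.find_spec hex)]
  exact ⟨hjK, hlo, Nat.find_spec hex⟩

lemma blkIdxF_mono : Monotone (blkIdxF c K) := fun _ _ hxy =>
  Finset.card_le_card fun _ hj => by
    simp only [Finset.mem_filter] at hj ⊢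
    exact ⟨hj.1, hj.2.trans hxy⟩

end BlockIndex

section PartialSums

variable {k : ℕ}

lemma psum_succ (m : Fin k → ℕ) (j : ℕ) : psum m (j + 1) = psum m j + nExt m j :=
  Finset.sum_range_succ _ _

lemma psum_mono (m : Fin k → ℕ) : Monotone (psum m) :=
  fun _ _ h => Finset.sum_le_sum_of_subset (Finset.range_subset_range.2 h)

lemma psum_self (m : Fin k → ℕ) : psum m k = ∑ i, m i := by
  rw [psum, ← Fin.sum_univ_eq_sum_range]
  exact Finset.sum_congr rfl fun i _ => dif_pos i.isLt

lemma psum_append_of_le (aT bT : Fin k → ℕ) {j : ℕ} (hj : j ≤ k) :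
    psum (Fin.append aT bT) j = psum aT j := by
  refine Finset.sum_congr rfl fun i hi => ?_
  have hik : i < k := (Finset.mem_range.1 hi).trans_le hj
  simp only [nExt, dif_pos hik, dif_pos (hik.trans_le (Nat.le_add_right k k))]
  exact Fin.append_left aT bT ⟨i, hik⟩

lemma psum_append_add (aT bT : Fin k → ℕ) {j : ℕ} (hj : j ≤ k) :
    psum (Fin.append aT bT) (k + j) = psum aT k + psum bT j := by
  induction j with
  | zero => exact psum_append_of_le aT bT le_rfl
  | succ j ih =>
    have hjk : j < k := hj
    have hlast : nExt (Fin.append aT bT) (k + j) = nExt bT j := by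
      simp only [nExt, dif_pos hjk, dif_pos (Nat.add_lt_add_left hjk k)]
      exact Fin.append_right aT bT ⟨j, hjk⟩
    rw [← Nat.add_assoc, psum_succ, ih hjk.le, hlast, psum_succ, Nat.add_assoc]

end PartialSums

section Table

variable {k : ℕ} (aT bT : Fin k → ℕ)

lemma blkPair_eq_blkIdxF : blkPair aT bT = blkIdxF (fun i => nExt aT i + nExt bT i) k := by
  funext y
  refine congrArg Finset.card (Finset.filter_congr fun j _ => ?_)
  rw [Finset.sum_add_distrib]
  rfl

lemma blkIdxF_nExt_eq_blkPair {n : Fin k → ℕ} (hT : ∀ i, aT i + bT i = n i) :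
    blkIdxF (nExt n) k = blkPair aT bT := by
  rw [blkPair_eq_blkIdxF]
  congr 1
  funext i
  by_cases hi : i < k
  · simp only [nExt, dif_pos hi, hT]
  · simp only [nExt, dif_neg hi]

lemma blkPair_eq_of_le_of_lt {j y : ℕ} (hj : j < k) (hlo : psum aT j + psum bT j ≤ y)
    (hhi : y < psum aT (j + 1) + psum bT (j + 1)) : blkPair aT bT y = j := by
  rw [blkPair_eq_blkIdxF]
  refine blkIdxF_eq_of_mem _ k hj ?_ ?_ <;> rwa [Finset.sum_add_distrib]

lemma blkPair_isBTab_of_mem_A {j y : ℕ} (hj : j < k) (hlo : psum aT j + psum bT j ≤ y)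
    (hhi : y < psum aT (j + 1) + psum bT j) :
    blkPair aT bT y = j ∧ isBTab aT bT y = false := by
  have hblk : blkPair aT bT y = j :=
    blkPair_eq_of_le_of_lt aT bT hj hlo (hhi.trans_le (by gcongr; exact psum_mono bT j.le_succ))
  refine ⟨hblk, ?_⟩
  rw [isBTab, hblk, decide_eq_false_iff_not, not_le]
  exact hhi

lemma blkPair_isBTab_of_mem_B {j y : ℕ} (hj : j < k) (hlo : psum aT (j + 1) + psum bT j ≤ y)
    (hhi : y < psum aT (j + 1) + psum bT (j + 1)) :
    blkPair aT bT y = j ∧ isBTab aT bT y = true := by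
  have hblk : blkPair aT bT y = j :=
    blkPair_eq_of_le_of_lt aT bT hj (le_trans (by gcongr; exact psum_mono aT j.le_succ) hlo) hhi
  refine ⟨hblk, ?_⟩
  rw [isBTab, hblk, decide_eq_true_iff]
  exact hlo

end Table

section Sorting

variable {k a b : ℕ} (aT bT : Fin k → ℕ)

/-- `σ_T⁻¹` on positions: the `x`-th position of `A_j` (resp. of `B_j`, when `a ≤ x`) is sent
to the corresponding position of `I_j^A` (resp. `I_j^B`). -/
def sortTab (a x : ℕ) : ℕ :=
  if x < a then x + psum bT (blkIdxF (nExt aT) k x)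
  else x - a + psum aT (blkIdxF (nExt bT) k (x - a) + 1)

lemma sortTab_lt_sortTab {x y : ℕ} (hxy : x < y) (hsame : x < a ↔ y < a) :
    sortTab aT bT a x < sortTab aT bT a y := by
  by_cases hxa : x < a
  · rw [sortTab, sortTab, if_pos hxa, if_pos (hsame.1 hxa)]
    exact Nat.add_lt_add_of_lt_of_le hxy (psum_mono bT (blkIdxF_mono _ k hxy.le))
  · rw [sortTab, sortTab, if_neg hxa, if_neg (mt hsame.2 hxa)]
    exact Nat.add_lt_add_of_lt_of_le (by omega)
      (psum_mono aT (Nat.succ_le_succ (blkIdxF_mono _ k (by omega))))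

variable {aT bT} (ha : psum aT k = a) (hb : psum bT k = b)
include ha hb

lemma sortTab_spec {x : ℕ} (hx : x < a + b) :
    sortTab aT bT a x < a + b ∧
      blkPair aT bT (sortTab aT bT a x) =
        (if x < a then blkIdxF (nExt aT) k x else blkIdxF (nExt bT) k (x - a)) ∧
      isBTab aT bT (sortTab aT bT a x) = decide (a ≤ x) := by
  by_cases hxa : x < a
  · obtain ⟨hj, hlo, hhi⟩ := blkIdxF_spec (nExt aT) k (x := x) (by change x < psum aT k; omega)
    set j := blkIdxF (nExt aT) k x
    have hy : sortTab aT bT a x = x + psum bT j := if_pos hxa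
    have hA : psum aT (j + 1) ≤ a := ha ▸ psum_mono aT hj
    have hB : psum bT j ≤ b := hb ▸ psum_mono bT hj.le
    obtain ⟨hblk, hisB⟩ := blkPair_isBTab_of_mem_A aT bT hj
      (hy ▸ Nat.add_le_add_right hlo _) (hy ▸ Nat.add_lt_add_right hhi _)
    refine ⟨?_, ?_, ?_⟩
    · change x < psum aT (j + 1) at hhi
      omega
    · rw [hblk, if_pos hxa]
    · rw [hisB, decide_eq_false (not_le.2 hxa)]
  · obtain ⟨hj, hlo, hhi⟩ := blkIdxF_spec (nExt bT) k (x := x - a)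
      (by change x - a < psum bT k; omega)
    set j := blkIdxF (nExt bT) k (x - a)
    have hy : sortTab aT bT a x = x - a + psum aT (j + 1) := if_neg hxa
    have hA : psum aT (j + 1) ≤ a := ha ▸ psum_mono aT hj
    have hB : psum bT (j + 1) ≤ b := hb ▸ psum_mono bT hj
    change psum bT j ≤ x - a at hlo
    change x - a < psum bT (j + 1) at hhi
    obtain ⟨hblk, hisB⟩ := blkPair_isBTab_of_mem_B aT bT (y := sortTab aT bT a x) hj
      (by rw [hy]; omega) (by rw [hy]; omega)
    refine ⟨by omega, ?_, ?_⟩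
    · rw [hblk, if_neg hxa]
    · rw [hisB, decide_eq_true (not_lt.1 hxa)]

lemma sigmaTab_symm_apply {N : ℕ} (hab : a + b = N) (x : Fin N) :
    ((sigmaTab N aT bT).symm x : ℕ) = sortTab aT bT a x := by
  subst hab
  have hspec (x : Fin (a + b)) := sortTab_spec ha hb x.isLt
  let τ : Fin (a + b) → Fin (a + b) := fun x => ⟨sortTab aT bT a x, (hspec x).1⟩
  have hisB (x : Fin (a + b)) : isBTab aT bT (τ x) = decide (a ≤ x) := (hspec x).2.2
  have hlt (x y : Fin (a + b)) (hxy : x < y) (h : isBTab aT bT (τ x) = isBTab aT bT (τ y)) :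
      τ x < τ y := by
    rw [hisB, hisB, decide_eq_decide] at h
    exact sortTab_lt_sortTab aT bT hxy (by omega)
  have hinj : Function.Injective τ := by
    intro x y h
    by_contra hne
    rcases lt_or_gt_of_ne hne with hxy | hxy
    · exact (hlt x y hxy (by rw [h])).ne h
    · exact (hlt y x hxy (by rw [h])).ne h.symm
  have hsort : Equiv.ofBijective τ (Finite.injective_iff_bijective.1 hinj) =
      Tuple.sort (fun x : Fin (a + b) => isBTab aT bT x) := by
    refine Tuple.eq_sort_iff.2 ⟨fun x y hxy => ?_, hlt⟩
    change isBTab aT bT (τ x) ≤ isBTab aT bT (τ y)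
    rw [hisB, hisB]
    exact Bool.le_iff_imp.2 fun h => decide_eq_true ((of_decide_eq_true h).trans hxy)
  rw [sigmaTab, ← hsort]
  rfl

end Sorting

section BlockIndexFormulas

variable {k a b : ℕ} {aT bT : Fin k → ℕ} (ha : psum aT k = a) (hb : psum bT k = b)
include ha hb

lemma blkIdxF_append {x : ℕ} (hx : x < a + b) :
    blkIdxF (nExt (Fin.append aT bT)) (k + k) x =
      if x < a then blkIdxF (nExt aT) k x else k + blkIdxF (nExt bT) k (x - a) := by
  by_cases hxa : x < a
  · obtain ⟨hj, hlo, hhi⟩ := blkIdxF_spec (nExt aT) k (x := x) (by change x < psum aT k; omega)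
    rw [if_pos hxa]
    refine blkIdxF_eq_of_mem _ _ (by omega) ?_ ?_
    · exact (psum_append_of_le aT bT hj.le).trans_le hlo
    · exact hhi.trans_eq (psum_append_of_le aT bT hj).symm
  · obtain ⟨hj, hlo, hhi⟩ := blkIdxF_spec (nExt bT) k (x := x - a)
      (by change x - a < psum bT k; omega)
    change psum bT _ ≤ x - a at hlo
    change x - a < psum bT (_ + 1) at hhi
    rw [if_neg hxa]
    refine blkIdxF_eq_of_mem _ _ (by omega) ?_ ?_
    · change psum (Fin.append aT bT) (k + _) ≤ x
      rw [psum_append_add aT bT hj.le]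
      omega
    · change x < psum (Fin.append aT bT) (k + _ + 1)
      rw [Nat.add_assoc, psum_append_add aT bT (show _ + 1 ≤ k from hj)]
      omega

lemma blkPair_sigmaTab_symm {N : ℕ} (hab : a + b = N) (x : Fin N) :
    blkPair aT bT ((sigmaTab N aT bT).symm x) =
      if (x : ℕ) < a then blkIdxF (nExt aT) k x else blkIdxF (nExt bT) k (x - a) := by
  rw [sigmaTab_symm_apply ha hb hab]
  exact (sortTab_spec ha hb (hab ▸ x.isLt)).2.1

end BlockIndexFormulas

lemma blkIdxF_pair {a b x : ℕ} (hx : x < a + b) :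
    blkIdxF (nExt ![a, b]) 2 x = if x < a then 0 else 1 := by
  have hsum1 : ∑ i ∈ Finset.range 1, nExt ![a, b] i = a := by simp [nExt]
  have hsum2 : ∑ i ∈ Finset.range 2, nExt ![a, b] i = a + b := by
    rw [Finset.sum_range_succ, hsum1]
    simp [nExt]
  split_ifs with hxa
  · exact blkIdxF_eq_of_mem _ _ two_pos (by simp) (hsum1 ▸ hxa)
  · exact blkIdxF_eq_of_mem _ _ one_lt_two (hsum1 ▸ not_lt.1 hxa) (hsum2 ▸ hx)

section Vanishing

variable {M : ℕ}

def vanishingOn (r : Fin M → Fin M → Prop) : Set (GL (Fin M) F) :=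
  {g | ∀ i j, r i j → g.val i j = 0}

lemma PparGL_eq_vanishingOn {k : ℕ} (n : Fin k → ℕ) :
    PparGL F M n = vanishingOn F fun i j => blkIdxF (nExt n) k j < blkIdxF (nExt n) k i :=
  rfl

lemma MparGL_eq_vanishingOn {k : ℕ} (n : Fin k → ℕ) :
    MparGL F M n = vanishingOn F fun i j => blkIdxF (nExt n) k j ≠ blkIdxF (nExt n) k i :=
  rfl

lemma vanishingOn_inter (r s : Fin M → Fin M → Prop) :
    vanishingOn F r ∩ vanishingOn F s = vanishingOn F fun i j => r i j ∨ s i j := by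
  ext g
  simp only [vanishingOn, Set.mem_inter_iff, Set.mem_ofPred_eq, or_imp, forall_and]

lemma conjPerm_vanishingOn (σ : Equiv.Perm (Fin M)) (r : Fin M → Fin M → Prop) :
    conjPerm F σ (vanishingOn F r) = vanishingOn F fun i j => r (σ.symm i) (σ.symm j) := by
  ext g
  constructor
  · rintro ⟨p, hp, hg⟩ i j hij
    rw [hg]
    exact hp _ _ hij
  · intro hg
    refine ⟨⟨g.val.submatrix σ σ, (↑g⁻¹ : Matrix (Fin M) (Fin M) F).submatrix σ σ, ?_, ?_⟩,
      fun i j hij => ?_, ?_⟩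
    · rw [Matrix.submatrix_mul_equiv, Units.mul_inv, Matrix.submatrix_one_equiv]
    · rw [Matrix.submatrix_mul_equiv, Units.inv_mul, Matrix.submatrix_one_equiv]
    · simpa using hg (σ i) (σ j) (by simpa using hij)
    · ext i j
      simp

end Vanishing

theorem stmt3 (N a b k : ℕ) (hab : a + b = N) (n : Fin k → ℕ) (aT bT : Fin k → ℕ)
    (hT : (∀ i, aT i + bT i = n i) ∧ (∑ i, aT i = a) ∧ (∑ i, bT i = b)) :
    conjPerm F (sigmaTab N aT bT) (PparGL F N n) ∩ MparGL F N ![a, b] =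
      MparGL F N ![a, b] ∩ PparGL F N (Fin.append aT bT) ∧
    conjPerm F (sigmaTab N aT bT) (MparGL F N n) ∩ MparGL F N ![a, b] =
      MparGL F N (Fin.append aT bT) := by
  obtain ⟨hTn, hTa, hTb⟩ := hT
  have ha : psum aT k = a := (psum_self aT).trans hTa
  have hb : psum bT k = b := (psum_self bT).trans hTb
  have hx (x : Fin N) : (x : ℕ) < a + b := hab ▸ x.isLt
  have hAk (x : Fin N) (hxa : (x : ℕ) < a) : blkIdxF (nExt aT) k x < k :=
    (blkIdxF_spec _ k (by change (x : ℕ) < psum aT k; omega)).1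
  simp only [PparGL_eq_vanishingOn, MparGL_eq_vanishingOn, conjPerm_vanishingOn,
    vanishingOn_inter, blkIdxF_nExt_eq_blkPair aT bT hTn, blkPair_sigmaTab_symm ha hb hab,
    blkIdxF_append ha hb (hx _), blkIdxF_pair (hx _)]
  refine ⟨congrArg _ ?_, congrArg _ ?_⟩ <;> funext i j <;> refine propext ?_ <;>
    have := hAk i <;> have := hAk j <;> split_ifs <;> omega

end Stmt3
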